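/- The real lattice Ψ(E_3) obtained from E_3 = {(x_1,x_2,x_3) ∈ Z[ω]^3 : x_1+x_2+x_3 ∈ (1+ω)Z[ω]} via the complex-to-real embedding of Q(ω) (sending each coordinate a+bω to the pair (a + b/2, b√3/2)) is equivalent, up to scaling and orthogonal transformation, to the dual root lattice E_6*. -/

import Mathlib

/-!
Ψ(E₃) and Ψ(E₆*) are literally the same set, so the identity map with scale `1` works.
Indeed `√-3 = ω (1 + ω)` is an associate of `1 + ω`, and `(1,-1,0)`, `(1,0,-1)` span the
vectors of coordinate sum `0`; hence both `E₃` and the `Z[ω]`-span of the three columns are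
`{x ∈ Z[ω]³ : x₁ + x₂ + x₃ ∈ (1 + ω) Z[ω]}`.
-/

noncomputable def ω : ℂ := (1 + Real.sqrt 3 * Complex.I) / 2

def Zω : Set ℂ := {x | ∃ a b : ℤ, x = (a : ℂ) + (b : ℂ) * ω}

def idealω : Set ℂ := {x | ∃ z ∈ Zω, x = (1 + ω) * z}

def Em (m : ℕ) : Set (Fin m → ℂ) :=
  {x | (∀ k, x k ∈ Zω) ∧ (∑ k, x k) ∈ idealω}

/-- The complex-to-real map Ψ : C³ → R⁶. -/
noncomputable def Psi3 (x : Fin 3 → ℂ) : Fin 6 → ℝ :=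
  ![(x 0).re, (x 1).re, (x 2).re, (x 0).im, (x 1).im, (x 2).im]

/-- The complex form of the dual root lattice E₆*: the Z[ω]-span of the columns
(√-3,0,0), (1,-1,0), (1,0,-1). -/
noncomputable def E6starC : Set (Fin 3 → ℂ) :=
  {x | ∃ c : Fin 3 → ℂ, (∀ k, c k ∈ Zω) ∧
    x = c 0 • ![Real.sqrt 3 * Complex.I, 0, 0] + c 1 • ![1, -1, 0] + c 2 • ![1, 0, -1]}

lemma ω_mul_self : ω * ω = ω - 1 := by
  have h : (Real.sqrt 3 : ℂ) * Real.sqrt 3 * (Complex.I * Complex.I) = -3 := by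
    rw [← Complex.ofReal_mul, Real.mul_self_sqrt (by norm_num), Complex.I_mul_I]
    norm_num
  unfold ω
  linear_combination (1 / 4 : ℂ) * h

lemma sqrt_three_mul_I_eq : (Real.sqrt 3 : ℂ) * Complex.I = ω * (1 + ω) := by
  have h : (Real.sqrt 3 : ℂ) * Complex.I = 2 * ω - 1 := by unfold ω; ring
  linear_combination h - ω_mul_self

lemma one_sub_ω_mul_ω : (1 - ω) * ω = 1 := by
  linear_combination -ω_mul_self

lemma Zω_add_mem {x y : ℂ} (hx : x ∈ Zω) (hy : y ∈ Zω) : x + y ∈ Zω := by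
  obtain ⟨a, b, rfl⟩ := hx
  obtain ⟨c, d, rfl⟩ := hy
  exact ⟨a + c, b + d, by push_cast; ring⟩

lemma Zω_neg_mem {x : ℂ} (hx : x ∈ Zω) : -x ∈ Zω := by
  obtain ⟨a, b, rfl⟩ := hx
  exact ⟨-a, -b, by push_cast; ring⟩

lemma Zω_mul_mem {x y : ℂ} (hx : x ∈ Zω) (hy : y ∈ Zω) : x * y ∈ Zω := by
  obtain ⟨a, b, rfl⟩ := hx
  obtain ⟨c, d, rfl⟩ := hy
  refine ⟨a * c - b * d, a * d + b * c + b * d, ?_⟩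
  push_cast
  linear_combination ((b : ℂ) * d) * ω_mul_self

lemma E6starC_combination (c : Fin 3 → ℂ) :
    c 0 • ![(Real.sqrt 3 : ℂ) * Complex.I, 0, 0] + c 1 • ![1, -1, 0] + c 2 • ![1, 0, -1]
      = ![c 0 * (ω * (1 + ω)) + c 1 + c 2, -c 1, -c 2] := by
  funext k
  fin_cases k <;> simp [sqrt_three_mul_I_eq]

lemma Em_three_subset_E6starC : Em 3 ⊆ E6starC := by
  rintro x ⟨hx, z, hz, hsum⟩
  rw [Fin.sum_univ_three] at hsum
  refine ⟨![(1 - ω) * z, -x 1, -x 2], ?_, ?_⟩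
  · intro k
    fin_cases k
    · exact Zω_mul_mem ⟨1, -1, by push_cast; ring⟩ hz
    · exact Zω_neg_mem (hx 1)
    · exact Zω_neg_mem (hx 2)
  · rw [E6starC_combination]
    funext k
    fin_cases k
    · show x 0 = (1 - ω) * z * (ω * (1 + ω)) + -x 1 + -x 2
      linear_combination hsum - (1 + ω) * z * one_sub_ω_mul_ω
    · exact (neg_neg _).symm
    · exact (neg_neg _).symm

lemma E6starC_subset_Em_three : E6starC ⊆ Em 3 := by
  rintro x ⟨c, hc, rfl⟩
  rw [E6starC_combination]
  refine ⟨fun k => ?_, ?_⟩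
  · fin_cases k
    · have hω : ω ∈ Zω := ⟨0, 1, by simp⟩
      exact Zω_add_mem (Zω_add_mem
        (Zω_mul_mem (hc 0) (Zω_mul_mem hω (Zω_add_mem ⟨1, 0, by simp⟩ hω))) (hc 1)) (hc 2)
    · exact Zω_neg_mem (hc 1)
    · exact Zω_neg_mem (hc 2)
  · refine ⟨ω * c 0, Zω_mul_mem ⟨0, 1, by simp⟩ (hc 0), ?_⟩
    simp only [Fin.sum_univ_three, Matrix.cons_val]
    ring

lemma Em_three_eq_E6starC : Em 3 = E6starC :=
  Em_three_subset_E6starC.antisymm E6starC_subset_Em_three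

/-- Ψ(E₃) is equivalent, up to scaling and orthogonal transformation, to E₆*. -/
theorem stmt10 :
    ∃ r : ℝ, 0 < r ∧
    ∃ f : (Fin 6 → ℝ) ≃ₗ[ℝ] (Fin 6 → ℝ),
      (∀ x y : Fin 6 → ℝ, ∑ k, f x k * f y k = ∑ k, x k * y k) ∧
      f '' ((fun z => r • z) '' (Psi3 '' Em 3)) = Psi3 '' E6starC := by
  refine ⟨1, one_pos, LinearEquiv.refl ℝ _, fun _ _ => rfl, ?_⟩
  simp only [Em_three_eq_E6starC, one_smul, Set.image_id']
  exact Set.image_id _
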